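/- arXiv:gr-qc/9503036 — 5 statements merged into one kernel-verified Lean document; each statement's English description precedes it below -/
import Mathlib

section
/- With G > 0, the functions w(r)² = N(r) = 1 - r²/G satisfy the relation N·(w')² + V = (Λ/G)r² with V = (1-w²)²/(2r²) precisely when Λ = 3/(2G). -/
/-! Since `w' = -r / (G w)` and `w² = N`, one gets `N (w')² = r² / G²` and `V = r² / (2 G²)`, so
`N (w')² + V = (3 / (2 G)) / G · r²` on the whole interval; comparing the coefficients of `r²` at
a single point `r ≠ 0` pins down `Λ`. -/

open Set

lemma hasDerivAt_sqrt_one_sub_sq_div {G r : ℝ} (h : 1 - r ^ 2 / G ≠ 0) :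
    HasDerivAt (fun x => Real.sqrt (1 - x ^ 2 / G))
      (-r / (G * Real.sqrt (1 - r ^ 2 / G))) r := by
  have hinner : HasDerivAt (fun x : ℝ => 1 - x ^ 2 / G) (-(2 * r) / G) r := by
    simpa [neg_div] using ((hasDerivAt_pow 2 r).div_const G).const_sub 1
  convert hinner.sqrt h using 1
  field_simp

lemma ding_hosoya_identity {G r : ℝ} (h : 0 < 1 - r ^ 2 / G) :
    (1 - r ^ 2 / G) * (-r / (G * Real.sqrt (1 - r ^ 2 / G))) ^ 2
        + (1 - Real.sqrt (1 - r ^ 2 / G) ^ 2) ^ 2 / (2 * r ^ 2)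
      = 3 / (2 * G) / G * r ^ 2 := by
  rw [div_pow, mul_pow, Real.sq_sqrt h.le]
  rcases eq_or_ne r 0 with rfl | hr
  · simp
  field_simp
  ring

lemma one_sub_sq_div_pos_of_mem_Ioo {G r : ℝ} (hG : 0 < G) (hr : r ∈ Ioo 0 (Real.sqrt G)) :
    0 < 1 - r ^ 2 / G := by
  have : r ^ 2 < G := by
    simpa [Real.sq_sqrt hG.le] using pow_lt_pow_left₀ hr.2 hr.1.le two_ne_zero
  rw [sub_pos, div_lt_one hG]
  exact this

theorem stmt_2 (G Λ : ℝ) (hG : 0 < G)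
    (N w V : ℝ → ℝ)
    (hN : ∀ r : ℝ, N r = 1 - r ^ 2 / G)
    (hw : ∀ r : ℝ, w r = Real.sqrt (1 - r ^ 2 / G))
    (hV : ∀ r : ℝ, V r = (1 - (w r) ^ 2) ^ 2 / (2 * r ^ 2)) :
    (∀ r ∈ Ioo 0 (Real.sqrt G),
        N r * (deriv w r) ^ 2 + V r = (Λ / G) * r ^ 2) ↔ Λ = 3 / (2 * G) := by
  have lhs_eq : ∀ r ∈ Ioo 0 (Real.sqrt G),
      N r * (deriv w r) ^ 2 + V r = 3 / (2 * G) / G * r ^ 2 := by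
    intro r hr
    have hpos := one_sub_sq_div_pos_of_mem_Ioo hG hr
    rw [funext hw, (hasDerivAt_sqrt_one_sub_sq_div hpos.ne').deriv, hN, hV, hw]
    exact ding_hosoya_identity hpos
  constructor
  · intro h
    have hsqrt : 0 < Real.sqrt G := Real.sqrt_pos.mpr hG
    have hmem : Real.sqrt G / 2 ∈ Ioo 0 (Real.sqrt G) := ⟨by positivity, by linarith⟩
    have hcoef := mul_right_cancel₀ (by positivity) ((h _ hmem).symm.trans (lhs_eq _ hmem))
    exact (div_left_inj' hG.ne').mp hcoef
  · rintro rfl r hr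
    exact lhs_eq r hr
end

section
/- The functions R(ρ) = √G sin(ρ/√G), w(ρ) = cos(ρ/√G), L ≡ 1, γ ≡ 0 satisfy the system: ẅ = w(w²-1)/R² + (1/2)ẇγ, R̈ = -(1/2)Ṙγ - G ẇ²/R, γ̇ = (1/2)γ² - (2/R²)[2GV + Ṙ² - 1], L̇ = -(1/2)Lγ, with V = (w²-1)²/(2R²) and Λ = 3/(2G), for all ρ ∈ (0, √G π). -/
open Set

theorem stmt_3 (G : ℝ) (hG : 0 < G)
    (R w L γ V : ℝ → ℝ)
    (hR : ∀ ρ : ℝ, R ρ = Real.sqrt G * Real.sin (ρ / Real.sqrt G))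
    (hw : ∀ ρ : ℝ, w ρ = Real.cos (ρ / Real.sqrt G))
    (hL : ∀ ρ : ℝ, L ρ = 1)
    (hγ : ∀ ρ : ℝ, γ ρ = 0)
    (hV : ∀ ρ : ℝ, V ρ = ((w ρ) ^ 2 - 1) ^ 2 / (2 * (R ρ) ^ 2)) :
    ∀ ρ ∈ Ioo 0 (Real.sqrt G * Real.pi),
      deriv (deriv w) ρ = w ρ * ((w ρ) ^ 2 - 1) / (R ρ) ^ 2 + (1/2) * deriv w ρ * γ ρ ∧
      deriv (deriv R) ρ = -(1/2) * deriv R ρ * γ ρ - G * (deriv w ρ) ^ 2 / R ρ ∧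
      deriv γ ρ = (1/2) * (γ ρ) ^ 2 - (2 / (R ρ) ^ 2) * (2 * G * V ρ + (deriv R ρ) ^ 2 - 1) ∧
      deriv L ρ = -(1/2) * L ρ * γ ρ := by
  set s := Real.sqrt G with hsdef
  have hs : 0 < s := Real.sqrt_pos.mpr hG
  have hs2 : s ^ 2 = G := Real.sq_sqrt hG.le
  have hwE : w = fun ρ => Real.cos (ρ / s) := funext hw
  have hRE : R = fun ρ => s * Real.sin (ρ / s) := funext hR
  have hLE : L = fun ρ => 1 := funext hL
  have hγE : γ = fun ρ => (0:ℝ) := funext hγ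
  have hdiv : ∀ ρ : ℝ, HasDerivAt (fun x : ℝ => x / s) (1 / s) ρ := fun ρ =>
    (hasDerivAt_id ρ).div_const s
  have hdsin : ∀ ρ : ℝ, HasDerivAt (fun x : ℝ => Real.sin (x / s)) (Real.cos (ρ / s) * (1 / s)) ρ := by
    intro ρ
    exact (Real.hasDerivAt_sin (ρ / s)).comp ρ (hdiv ρ)
  have hdcos : ∀ ρ : ℝ, HasDerivAt (fun x : ℝ => Real.cos (x / s)) (-Real.sin (ρ / s) * (1 / s)) ρ := by
    intro ρ
    exact (Real.hasDerivAt_cos (ρ / s)).comp ρ (hdiv ρ)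
  have hw1 : deriv w = fun ρ => -Real.sin (ρ / s) / s := by
    funext ρ
    rw [hwE, (hdcos ρ).deriv]
    ring
  have hw2 : ∀ ρ : ℝ, deriv (deriv w) ρ = -Real.cos (ρ / s) / s ^ 2 := by
    intro ρ
    rw [hw1]
    have : HasDerivAt (fun x : ℝ => -Real.sin (x / s) / s) (-(Real.cos (ρ / s) * (1 / s)) / s) ρ :=
      (hdsin ρ).neg.div_const s
    rw [this.deriv]
    ring
  have hR1 : deriv R = fun ρ => Real.cos (ρ / s) := by
    funext ρ
    have : HasDerivAt (fun x : ℝ => s * Real.sin (x / s)) (s * (Real.cos (ρ / s) * (1 / s))) ρ :=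
      (hdsin ρ).const_mul s
    rw [hRE, this.deriv]
    field_simp
  have hR2 : ∀ ρ : ℝ, deriv (deriv R) ρ = -Real.sin (ρ / s) / s := by
    intro ρ
    rw [hR1, (hdcos ρ).deriv]
    ring
  intro ρ hρ
  have hsin : 0 < Real.sin (ρ / s) := by
    apply Real.sin_pos_of_pos_of_lt_pi
    · exact div_pos hρ.1 hs
    · rw [div_lt_iff₀ hs]
      linarith [hρ.2]
  have hsin' : Real.sin (ρ / s) ≠ 0 := ne_of_gt hsin
  have hs0 : s ≠ 0 := ne_of_gt hs
  have hpyth := Real.sin_sq_add_cos_sq (ρ / s)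
  refine ⟨?_, ?_, ?_, ?_⟩
  · rw [hw2, hw1, hwE, hRE, hγ]
    simp only
    have hc : Real.cos (ρ / s) ^ 2 - 1 = -(Real.sin (ρ / s)) ^ 2 := by linarith
    rw [hc]
    field_simp
    ring
  · rw [hR2, hR1, hw1, hRE, hγ]
    simp only
    rw [← hs2]
    field_simp
    ring
  · rw [hγE, hV, hw, hR, hR1]
    simp only [deriv_const']
    rw [← hs2]
    have h1 : (Real.cos (ρ / s) ^ 2 - 1) ^ 2 = Real.sin (ρ / s) ^ 4 := by nlinarith [hpyth]
    rw [h1]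
    field_simp
    nlinarith [hpyth]
  · rw [hLE, hγ]
    simp
end

section
/- The functions w ≡ 1, R(ρ) = √G sin(ρ/√G), γ(ρ) = (2/√G) tan(ρ/√G), L(ρ) = cos(ρ/√G) satisfy the system ẅ = w(w²-1)/R² + (1/2)ẇγ, R̈ = -(1/2)Ṙγ - Gẇ²/R, γ̇ = (1/2)γ² - (2/R²)[2GV + Ṙ² - 1], L̇ = -(1/2)Lγ, with V = (w²-1)²/(2R²) and Λ = 3/(2G), for all ρ ∈ (0, √G π/2). -/
/-! With `w ≡ 1` the potential `V` vanishes and the `w`-equation is trivial. Writing `s = √G` and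
`θ = ρ / s`, both the `R`- and the `L`-equation read `-sin θ / s = -(1/2) cos θ · (2/s) tan θ`, and the
`γ`-equation is `1 + tan² θ = 1 / cos² θ`. -/

open Set Real

section ScaledTrig

variable (a : ℝ)

theorem hasDerivAt_mul_sin_div (ha : a ≠ 0) (x : ℝ) :
    HasDerivAt (fun t => a * sin (t / a)) (cos (x / a)) x :=
  (((hasDerivAt_id' x).div_const a).sin.const_mul a).congr_deriv (by field_simp)

theorem deriv_mul_sin_div (ha : a ≠ 0) :
    deriv (fun t => a * sin (t / a)) = fun t => cos (t / a) :=
  funext fun x => (hasDerivAt_mul_sin_div a ha x).deriv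

theorem hasDerivAt_cos_div (x : ℝ) :
    HasDerivAt (fun t => cos (t / a)) (-sin (x / a) / a) x :=
  ((hasDerivAt_id' x).div_const a).cos.congr_deriv (by ring)

theorem hasDerivAt_tan_div {x : ℝ} (hx : cos (x / a) ≠ 0) :
    HasDerivAt (fun t => tan (t / a)) (1 / (a * cos (x / a) ^ 2)) x :=
  ((hasDerivAt_tan hx).comp (h := fun t => t / a) x ((hasDerivAt_id' x).div_const a)).congr_deriv
    (by ring)

end ScaledTrig

theorem sin_div_pos_and_cos_div_pos {a x : ℝ} (ha : 0 < a) (hx : x ∈ Ioo 0 (a * π / 2)) :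
    0 < sin (x / a) ∧ 0 < cos (x / a) := by
  have hlt : x / a < π / 2 := by rw [div_lt_iff₀ ha]; linarith [hx.2]
  have hpos : 0 < x / a := div_pos hx.1 ha
  exact ⟨sin_pos_of_pos_of_lt_pi hpos (by linarith [pi_pos]),
    cos_pos_of_mem_Ioo ⟨by linarith, hlt⟩⟩

theorem stmt_4 (G : ℝ) (hG : 0 < G)
    (R w L γ V : ℝ → ℝ)
    (hw : ∀ ρ : ℝ, w ρ = 1)
    (hR : ∀ ρ : ℝ, R ρ = Real.sqrt G * Real.sin (ρ / Real.sqrt G))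
    (hγ : ∀ ρ : ℝ, γ ρ = (2 / Real.sqrt G) * Real.tan (ρ / Real.sqrt G))
    (hL : ∀ ρ : ℝ, L ρ = Real.cos (ρ / Real.sqrt G))
    (hV : ∀ ρ : ℝ, V ρ = ((w ρ) ^ 2 - 1) ^ 2 / (2 * (R ρ) ^ 2)) :
    ∀ ρ ∈ Ioo 0 (Real.sqrt G * Real.pi / 2),
      deriv (deriv w) ρ = w ρ * ((w ρ) ^ 2 - 1) / (R ρ) ^ 2 + (1/2) * deriv w ρ * γ ρ ∧
      deriv (deriv R) ρ = -(1/2) * deriv R ρ * γ ρ - G * (deriv w ρ) ^ 2 / R ρ ∧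
      deriv γ ρ = (1/2) * (γ ρ) ^ 2 - (2 / (R ρ) ^ 2) * (2 * G * V ρ + (deriv R ρ) ^ 2 - 1) ∧
      deriv L ρ = -(1/2) * L ρ * γ ρ := by
  intro ρ hρ
  set s := √G
  have hs : 0 < s := sqrt_pos.mpr hG
  obtain ⟨hsin, hcos⟩ := sin_div_pos_and_cos_div_pos hs hρ
  obtain rfl : w = fun _ => 1 := funext hw
  obtain rfl : R = fun t => s * sin (t / s) := funext hR
  obtain rfl : γ = fun t => 2 / s * tan (t / s) := funext hγ
  obtain rfl : L = fun t => cos (t / s) := funext hL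
  have hV0 : V ρ = 0 := by simp [hV]
  have hR' := deriv_mul_sin_div s hs.ne'
  have hL' := (hasDerivAt_cos_div s ρ).deriv
  have hγ' := ((hasDerivAt_tan_div s hcos.ne').const_mul (2 / s)).deriv
  refine ⟨by simp, ?_, ?_, ?_⟩
  · simp only [hR', hL', deriv_const', tan_eq_sin_div_cos]
    field_simp
    ring
  · beta_reduce
    rw [hγ', hV0, hR', tan_eq_sin_div_cos]
    field_simp
    rw [cos_sq']
    ring
  · simp only [hL', tan_eq_sin_div_cos]
    field_simp
end

section
/- Let w : [0, ρ₀] → ℝ be a C² solution of ẅ = w(w²-1)/R² + (1/2)ẇγ on (0, ρ₀), with R(ρ) > 0 on (0, ρ₀), satisfying w(0) = 1, w(ρ₀) = ±1 (boundary limits). Then |w(ρ)| ≤ 1 for all ρ ∈ (0, ρ₀). -/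
/-!
Let `c` be a maximum point of `|w|` on `[0, ρ₀]`. If `|w c| > 1`, the boundary values force `c`
to be interior. Since `-w` solves the same equation we may assume `w c > 1`; then `w' c = 0`
and the equation gives `w'' c = w c (w c² - 1) / R c² > 0`, which is impossible at a local
maximum by the second-derivative test.
-/

open Set Filter Topology

theorem IsLocalMax.nonpos_of_hasDerivAt_hasDerivAt {f f' : ℝ → ℝ} {x₀ f'' : ℝ}
    (h : IsLocalMax f x₀) (hf : ∀ᶠ x in 𝓝 x₀, HasDerivAt f (f' x) x)
    (hf' : HasDerivAt f' f'' x₀) : f'' ≤ 0 := by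
  by_contra! hpos
  -- the second-derivative test makes `x₀` a local minimum too, so `f` is locally constant
  have hderiv : deriv f =ᶠ[𝓝 x₀] f' := hf.mono fun x hx => hx.deriv
  have hmin : IsLocalMin f x₀ :=
    isLocalMin_of_deriv_deriv_pos (by rwa [hderiv.deriv_eq, hf'.deriv])
      (by rw [hderiv.eq_of_nhds, h.hasDerivAt_eq_zero hf.self_of_nhds])
      hf.self_of_nhds.continuousAt
  have hconst : f =ᶠ[𝓝 x₀] fun _ => f x₀ := (h.and hmin).mono fun x hx => le_antisymm hx.1 hx.2
  have hf'_zero : f' =ᶠ[𝓝 x₀] fun _ => 0 := (hconst.eventuallyEq_nhds.and hf).mono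
    fun x hx => hx.2.unique ((hasDerivAt_const x (f x₀)).congr_of_eventuallyEq hx.1)
  exact hpos.ne' (hf'.unique ((hasDerivAt_const x₀ 0).congr_of_eventuallyEq hf'_zero))

theorem le_one_of_isLocalMax {w w' : ℝ → ℝ} {c w'' R γ : ℝ} (hmax : IsLocalMax w c)
    (hw' : ∀ᶠ x in 𝓝 c, HasDerivAt w (w' x) x) (hw'' : HasDerivAt w' w'' c)
    (heq : w'' = w c * (w c ^ 2 - 1) / R ^ 2 + 1 / 2 * w' c * γ) (hR : R ≠ 0) :
    w c ≤ 1 := by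
  have hw'c : w' c = 0 := hmax.hasDerivAt_eq_zero hw'.self_of_nhds
  have hw''c : w'' ≤ 0 := hmax.nonpos_of_hasDerivAt_hasDerivAt hw' hw''
  rw [heq, hw'c, mul_zero, zero_mul, add_zero] at hw''c
  by_contra! hgt
  have : 0 < w c * (w c ^ 2 - 1) / R ^ 2 := by
    exact div_pos (mul_pos (by linarith) (by nlinarith)) (by positivity)
  linarith

theorem abs_le_one_of_isLocalMax_abs {w w' : ℝ → ℝ} {c w'' R γ : ℝ}
    (hmax : IsLocalMax (fun x => |w x|) c)
    (hw' : ∀ᶠ x in 𝓝 c, HasDerivAt w (w' x) x) (hw'' : HasDerivAt w' w'' c)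
    (heq : w'' = w c * (w c ^ 2 - 1) / R ^ 2 + 1 / 2 * w' c * γ) (hR : R ≠ 0) :
    |w c| ≤ 1 := by
  rcases le_or_gt 0 (w c) with hc | hc
  · have hmax_w : IsLocalMax w c :=
      hmax.mono fun x hx => (le_abs_self (w x)).trans (hx.trans_eq (abs_of_nonneg hc))
    rw [abs_of_nonneg hc]
    exact le_one_of_isLocalMax hmax_w hw' hw'' heq hR
  · have hmax_neg : IsLocalMax (fun x => -w x) c :=
      hmax.mono fun x hx => (neg_le_abs (w x)).trans (hx.trans_eq (abs_of_neg hc))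
    have hneg := le_one_of_isLocalMax (w' := fun x => -w' x) (γ := γ) hmax_neg
      (hw'.mono fun x hx => hx.neg) hw''.neg (by rw [heq]; ring) hR
    rwa [abs_of_neg hc]

theorem stmt_5_general (ρ₀ : ℝ)
    (R γ w w' w'' : ℝ → ℝ)
    (hRpos : ∀ ρ ∈ Ioo 0 ρ₀, 0 < R ρ)
    (hwcont : ContinuousOn w (Icc 0 ρ₀))
    (hw' : ∀ ρ ∈ Ioo 0 ρ₀, HasDerivAt w (w' ρ) ρ)
    (hw'' : ∀ ρ ∈ Ioo 0 ρ₀, HasDerivAt w' (w'' ρ) ρ)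
    (heq : ∀ ρ ∈ Ioo 0 ρ₀,
      w'' ρ = w ρ * ((w ρ) ^ 2 - 1) / (R ρ) ^ 2 + (1/2) * w' ρ * γ ρ)
    (hw0 : w 0 = 1) (hwρ₀ : w ρ₀ = 1 ∨ w ρ₀ = -1) :
    ∀ ρ ∈ Ioo 0 ρ₀, |w ρ| ≤ 1 := by
  intro ρ hρ
  obtain ⟨c, hc, hcmax⟩ :=
    isCompact_Icc.exists_isMaxOn ⟨ρ, Ioo_subset_Icc_self hρ⟩ hwcont.abs
  by_contra! hρ_gt
  have hc_gt : 1 < |w c| := hρ_gt.trans_le (hcmax (Ioo_subset_Icc_self hρ))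
  have hc_int : c ∈ Ioo 0 ρ₀ := by
    refine ⟨hc.1.lt_of_ne ?_, hc.2.lt_of_ne ?_⟩ <;> rintro rfl
    · simp [hw0] at hc_gt
    · rcases hwρ₀ with h | h <;> simp [h] at hc_gt
  have hnhds : Ioo 0 ρ₀ ∈ 𝓝 c := Ioo_mem_nhds hc_int.1 hc_int.2
  have hc_le := abs_le_one_of_isLocalMax_abs
    (hcmax.isLocalMax (mem_of_superset hnhds Ioo_subset_Icc_self))
    (eventually_of_mem hnhds hw') (hw'' c hc_int) (heq c hc_int) (hRpos c hc_int).ne'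
  exact hc_gt.not_ge hc_le

theorem stmt_5 (ρ₀ : ℝ) (hρ₀ : 0 < ρ₀)
    (R γ w w' w'' : ℝ → ℝ)
    (hRcont : ContinuousOn R (Ioo 0 ρ₀)) (hγcont : ContinuousOn γ (Ioo 0 ρ₀))
    (hRpos : ∀ ρ ∈ Ioo 0 ρ₀, 0 < R ρ)
    (hwcont : ContinuousOn w (Icc 0 ρ₀))
    (hw' : ∀ ρ ∈ Ioo 0 ρ₀, HasDerivAt w (w' ρ) ρ)
    (hw'' : ∀ ρ ∈ Ioo 0 ρ₀, HasDerivAt w' (w'' ρ) ρ)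
    (heq : ∀ ρ ∈ Ioo 0 ρ₀,
      w'' ρ = w ρ * ((w ρ) ^ 2 - 1) / (R ρ) ^ 2 + (1/2) * w' ρ * γ ρ)
    (hw0 : w 0 = 1) (hwρ₀ : w ρ₀ = 1 ∨ w ρ₀ = -1) :
    ∀ ρ ∈ Ioo 0 ρ₀, |w ρ| ≤ 1 :=
  stmt_5_general ρ₀ R γ w w' w'' hRpos hwcont hw' hw'' heq hw0 hwρ₀
end

section
/- Let w : [0, ρ₀] → ℝ be a C² solution of ẅ = w(w²-1)/R² + (1/2)ẇγ on (0, ρ₀) with R > 0 on (0,ρ₀), w(0) = 1, w(ρ₀) = 1, and |w| ≤ 1. If w is not identically 1 then w has a zero in (0, ρ₀). -/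
/-!
Suppose `w` has no zero in `(0, ρ₀)`. Since `w = 1` at both ends, `w > 0` on `[0, ρ₀]`, and
since `w ≤ 1` is not identically `1`, its minimum `w m` lies in `(0, 1)` and is attained at an
interior point. There `ẇ = 0`, so the equation gives `ẅ(m) = w (w² - 1) / R² < 0`, contradicting
the second-order condition `ẅ(m) ≥ 0` at a minimum.
-/

open Set Filter Topology

theorem IsPreconnected.pos_of_ne_zero {X : Type*} [TopologicalSpace X] {s : Set X}
    (hs : IsPreconnected s) {f : X → ℝ} (hf : ContinuousOn f s) (hne : ∀ x ∈ s, f x ≠ 0)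
    {a : X} (ha : a ∈ s) (hfa : 0 < f a) {x : X} (hx : x ∈ s) : 0 < f x := by
  by_contra! hfx
  obtain ⟨y, hy, hfy⟩ := hs.intermediate_value hx ha hf ⟨hfx, hfa.le⟩
  exact hne y hy hfy

theorem IsLocalMin.nonneg_of_hasDerivAt_of_hasDerivAt {f f' : ℝ → ℝ} {x f'' : ℝ}
    (hmin : IsLocalMin f x) (hf : ∀ᶠ y in 𝓝 x, HasDerivAt f (f' y) y)
    (hf' : HasDerivAt f' f'' x) : 0 ≤ f'' := by
  by_contra! hneg
  have hderiv : deriv f =ᶠ[𝓝 x] f' := hf.mono fun y hy ↦ hy.deriv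
  have hderiv' : HasDerivAt (deriv f) f'' x := hf'.congr_of_eventuallyEq hderiv
  have hcrit : deriv f x = 0 := hmin.deriv_eq_zero
  -- By the second-derivative test `x` is also a local maximum, so `f` is locally constant.
  have hmax : IsLocalMax f x := isLocalMax_of_deriv_deriv_neg (hderiv'.deriv ▸ hneg) hcrit
    hf.self_of_nhds.continuousAt
  have hconst : f =ᶠ[𝓝 x] fun _ ↦ f x := (hmin.and hmax).mono fun y hy ↦ le_antisymm hy.2 hy.1
  have hderiv_zero : deriv f =ᶠ[𝓝 x] fun _ ↦ 0 := by
    simpa using hconst.deriv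
  have : f'' = 0 := hderiv'.unique ((hasDerivAt_const x (0 : ℝ)).congr_of_eventuallyEq hderiv_zero)
  linarith

theorem stmt_6_general (ρ₀ : ℝ)
    (R γ w w' w'' : ℝ → ℝ)
    (hRpos : ∀ ρ ∈ Ioo 0 ρ₀, 0 < R ρ)
    (hwcont : ContinuousOn w (Icc 0 ρ₀))
    (hw' : ∀ ρ ∈ Ioo 0 ρ₀, HasDerivAt w (w' ρ) ρ)
    (hw'' : ∀ ρ ∈ Ioo 0 ρ₀, HasDerivAt w' (w'' ρ) ρ)
    (heq : ∀ ρ ∈ Ioo 0 ρ₀,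
      w'' ρ = w ρ * ((w ρ) ^ 2 - 1) / (R ρ) ^ 2 + (1/2) * w' ρ * γ ρ)
    (hw0 : w 0 = 1) (hwρ₀ : w ρ₀ = 1)
    (hbound : ∀ ρ ∈ Icc 0 ρ₀, |w ρ| ≤ 1)
    (hnontriv : ¬ (∀ ρ ∈ Icc 0 ρ₀, w ρ = 1)) :
    ∃ ρ ∈ Ioo 0 ρ₀, w ρ = 0 := by
  by_contra! hzero
  obtain ⟨a, ha, hwa⟩ : ∃ a ∈ Icc 0 ρ₀, w a ≠ 1 := by push Not at hnontriv; exact hnontriv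
  have hne : ∀ ρ ∈ Icc 0 ρ₀, w ρ ≠ 0 := by
    intro ρ hρ
    rcases eq_endpoints_or_mem_Ioo_of_mem_Icc hρ with rfl | rfl | hρ
    exacts [by simp [hw0], by simp [hwρ₀], hzero ρ hρ]
  have h0 : (0 : ℝ) ∈ Icc 0 ρ₀ := left_mem_Icc.2 (ha.1.trans ha.2)
  obtain ⟨m, hm, hmin⟩ := isCompact_Icc.exists_isMinOn ⟨a, ha⟩ hwcont
  have hwm_pos : 0 < w m :=
    isPreconnected_Icc.pos_of_ne_zero hwcont hne h0 (by simp [hw0]) hm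
  have hwm_lt : w m < 1 := (hmin ha).trans_lt ((le_of_abs_le (hbound a ha)).lt_of_ne hwa)
  have hm' : m ∈ Ioo 0 ρ₀ := by
    rcases eq_endpoints_or_mem_Ioo_of_mem_Icc hm with rfl | rfl | hm'
    exacts [absurd hw0 hwm_lt.ne, absurd hwρ₀ hwm_lt.ne, hm']
  have hlocmin : IsLocalMin w m := hmin.isLocalMin (Icc_mem_nhds hm'.1 hm'.2)
  have hcrit : w' m = 0 := hlocmin.hasDerivAt_eq_zero (hw' m hm')
  have hconvex : 0 ≤ w'' m := hlocmin.nonneg_of_hasDerivAt_of_hasDerivAt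
    (eventually_of_mem (Ioo_mem_nhds hm'.1 hm'.2) hw') (hw'' m hm')
  have hconcave : w'' m < 0 := by
    rw [heq m hm', hcrit, mul_zero, zero_mul, add_zero]
    exact div_neg_of_neg_of_pos (by nlinarith) (pow_pos (hRpos m hm') 2)
  exact hconcave.not_ge hconvex

theorem stmt_6 (ρ₀ : ℝ) (hρ₀ : 0 < ρ₀)
    (R γ w w' w'' : ℝ → ℝ)
    (hRcont : ContinuousOn R (Ioo 0 ρ₀)) (hγcont : ContinuousOn γ (Ioo 0 ρ₀))
    (hRpos : ∀ ρ ∈ Ioo 0 ρ₀, 0 < R ρ)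
    (hwcont : ContinuousOn w (Icc 0 ρ₀))
    (hw' : ∀ ρ ∈ Ioo 0 ρ₀, HasDerivAt w (w' ρ) ρ)
    (hw'' : ∀ ρ ∈ Ioo 0 ρ₀, HasDerivAt w' (w'' ρ) ρ)
    (heq : ∀ ρ ∈ Ioo 0 ρ₀,
      w'' ρ = w ρ * ((w ρ) ^ 2 - 1) / (R ρ) ^ 2 + (1/2) * w' ρ * γ ρ)
    (hw0 : w 0 = 1) (hwρ₀ : w ρ₀ = 1)
    (hbound : ∀ ρ ∈ Icc 0 ρ₀, |w ρ| ≤ 1)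
    (hnontriv : ¬ (∀ ρ ∈ Icc 0 ρ₀, w ρ = 1)) :
    ∃ ρ ∈ Ioo 0 ρ₀, w ρ = 0 :=
  stmt_6_general ρ₀ R γ w w' w'' hRpos hwcont hw' hw'' heq hw0 hwρ₀ hbound hnontriv
end
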